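/- Let z ∈ Ĩ_n with ĉ(z) = (c_1,...,c_n), let i ∈ [n] with z(i) > z(i+1), and let z' = z s_i if z s_i = s_i z, else z' = s_i z s_i. If i is a visible descent of z, then ĉ(z') is obtained from ĉ(z) by replacing positions i, i+1 with c_{i+1}, c_i − 1 (indices mod n). If i is not a visible descent: when z(i+1) = i+1, ĉ(z') agrees with ĉ(z) except position i is c_i − 1; when z(i+1) ≠ i+1, ĉ(z') agrees with ĉ(z) except that the entry c_j is decreased by 1, where j ∈ [n] \ {i} is congruent to z(i+1) mod n. -/

import Mathlib

open scoped TensorProduct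

/-- Membership in the affine symmetric group `S̃_n`, viewed inside `Equiv.Perm ℤ`. -/
def IsAffine (n : ℕ) (π : Equiv.Perm ℤ) : Prop :=
  (∀ i : ℤ, π (i + n) = π i + n) ∧
  (∑ i ∈ Finset.Icc (1 : ℤ) (n : ℤ), π i) = ∑ i ∈ Finset.Icc (1 : ℤ) (n : ℤ), i

/-- The underlying function of the affine reflection `t_{ij}`. -/
def affTFun (n : ℕ) (i j k : ℤ) : ℤ :=
  if (k - i) % (n : ℤ) = 0 then k - i + j
  else if (k - j) % (n : ℤ) = 0 then k - j + i
  else k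

theorem affTFun_involutive {n : ℕ} {i j : ℤ} (h : ¬ (j - i) % (n : ℤ) = 0) :
    Function.Involutive (affTFun n i j) := by
  have key : ∀ a : ℤ, a % (n : ℤ) = 0 ↔ (n : ℤ) ∣ a :=
    fun a => (@Int.dvd_iff_emod_eq_zero (n : ℤ) a).symm
  rw [key] at h
  intro k
  by_cases h1 : (n : ℤ) ∣ (k - i)
  · have h2 : ¬ (n : ℤ) ∣ (k - i + j - i) := by
      intro hd
      apply h
      have h5 : j - i = (k - i + j - i) - (k - i) := by ring
      rw [h5]
      exact dvd_sub hd h1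
    have h3 : (n : ℤ) ∣ (k - i + j - j) := by
      have h5 : k - i + j - j = k - i := by ring
      rw [h5]; exact h1
    have e1 : affTFun n i j k = k - i + j := by simp [affTFun, key, h1]
    have e2 : affTFun n i j (k - i + j) = k := by
      simp only [affTFun, key]
      rw [if_neg h2, if_pos h3]
      ring
    rw [e1, e2]
  · by_cases h2 : (n : ℤ) ∣ (k - j)
    · have h3 : (n : ℤ) ∣ (k - j + i - i) := by
        have h5 : k - j + i - i = k - j := by ring
        rw [h5]; exact h2
      have e1 : affTFun n i j k = k - j + i := by simp [affTFun, key, h1, h2]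
      have e2 : affTFun n i j (k - j + i) = k := by
        simp only [affTFun, key]
        rw [if_pos h3]
        ring
      rw [e1, e2]
    · have e1 : affTFun n i j k = k := by simp [affTFun, key, h1, h2]
      rw [e1, e1]

/-- The affine reflection `t_{ij}` (interpreted as the identity when `i ≡ j (mod n)`). -/
noncomputable def affT (n : ℕ) (i j : ℤ) : Equiv.Perm ℤ :=
  if h : (j - i) % (n : ℤ) = 0 then 1
  else Function.Involutive.toPerm _ (affTFun_involutive h)

/-- The simple reflection `s_i = t_{i,i+1}` of `S̃_n`. -/
noncomputable def affS (n : ℕ) (i : ℤ) : Equiv.Perm ℤ := affT n i (i + 1)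

/-- Coxeter length: minimal length of a word in the simple reflections `s_1, …, s_n`. -/
noncomputable def wordLength (n : ℕ) (π : Equiv.Perm ℤ) : ℕ :=
  sInf {l : ℕ | ∃ w : List ℤ,
    (∀ x ∈ w, 1 ≤ x ∧ x ≤ (n : ℤ)) ∧ (w.map (affS n)).prod = π ∧ w.length = l}

/-- The set of inversions of `π`, up to the diagonal translation relation. -/
def InvPair (π : Equiv.Perm ℤ) : Type :=
  {p : ℤ × ℤ // p.1 < p.2 ∧ π p.2 < π p.1}

/-- The number of equivalence classes of inversions of `π` under
`(a,b) ~ (a + mn, b + mn)`. -/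
noncomputable def invLength (n : ℕ) (π : Equiv.Perm ℤ) : ℕ :=
  Nat.card (Quot fun p q : InvPair π =>
    ∃ m : ℤ, q.1.1 = p.1.1 + m * n ∧ q.1.2 = p.1.2 + m * n)

/-- Entry `c_i` of the code of an affine permutation. -/
noncomputable def codeEntry (π : Equiv.Perm ℤ) (i : ℤ) : ℕ :=
  Nat.card {j : ℤ // i < j ∧ π j < π i}

/-- Entry `ĉ_i` of the involution code of an affine involution. -/
noncomputable def icodeEntry (z : Equiv.Perm ℤ) (i : ℤ) : ℕ :=
  Nat.card {j : ℤ // i < j ∧ z j < z i ∧ z j ≤ i}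

/-- `ℓ'(z)`: `n` minus the number of orbits of `z` acting on `ℤ/nℤ`. -/
noncomputable def lprime (n : ℕ) (z : Equiv.Perm ℤ) : ℕ :=
  n - Nat.card (Quot fun a b : ZMod n => ((z (a.val : ℤ) : ℤ) : ZMod n) = b)

/-- The characterizing properties of the Demazure (0-Hecke) product on `S̃_n`:
closure, associativity, `s_i ∘ s_i = s_i`, and agreement with the group product
on length-additive factorizations. -/
def IsDemazure (n : ℕ) (D : Equiv.Perm ℤ → Equiv.Perm ℤ → Equiv.Perm ℤ) : Prop :=
  (∀ a b, IsAffine n a → IsAffine n b → IsAffine n (D a b)) ∧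
  (∀ a b c, IsAffine n a → IsAffine n b → IsAffine n c →
    D (D a b) c = D a (D b c)) ∧
  (∀ i : ℤ, D (affS n i) (affS n i) = affS n i) ∧
  (∀ a b, IsAffine n a → IsAffine n b →
    wordLength n (a * b) = wordLength n a + wordLength n b → D a b = a * b)

/-- The set of Hecke atoms `{π : π⁻¹ ∘ π = z}`. -/
def AHecke (n : ℕ) (D : Equiv.Perm ℤ → Equiv.Perm ℤ → Equiv.Perm ℤ)
    (z : Equiv.Perm ℤ) : Set (Equiv.Perm ℤ) :=
  {π | IsAffine n π ∧ D π⁻¹ π = z}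

/-- The set of atoms: minimal-length Hecke atoms. -/
def DemAtoms (n : ℕ) (D : Equiv.Perm ℤ → Equiv.Perm ℤ → Equiv.Perm ℤ)
    (z : Equiv.Perm ℤ) : Set (Equiv.Perm ℤ) :=
  {π | π ∈ AHecke n D z ∧ ∀ σ ∈ AHecke n D z, wordLength n π ≤ wordLength n σ}

/-- The Bruhat covering relation on `S̃_n`. -/
def BruhatCov (n : ℕ) (a b : Equiv.Perm ℤ) : Prop :=
  (∃ i j : ℤ, i < j ∧ (j - i) % (n : ℤ) ≠ 0 ∧ b = a * affT n i j) ∧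
  wordLength n b = wordLength n a + 1

/-- The Bruhat order on `S̃_n`. -/
def BruhatLE (n : ℕ) : Equiv.Perm ℤ → Equiv.Perm ℤ → Prop :=
  Relation.ReflTransGen (BruhatCov n)

/-- The covering relation of the Bruhat order restricted to involutions in `S̃_n`. -/
def BruhatCovI (n : ℕ) (y z : Equiv.Perm ℤ) : Prop :=
  IsAffine n y ∧ IsAffine n z ∧ y⁻¹ = y ∧ z⁻¹ = z ∧
  BruhatLE n y z ∧ y ≠ z ∧
  ∀ w : Equiv.Perm ℤ, IsAffine n w → w⁻¹ = w →
    BruhatLE n y w → BruhatLE n w z → w = y ∨ w = z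

/-- Strict dominance order on partitions (written as weakly decreasing functions). -/
def DomLT (p q : ℕ → ℕ) : Prop :=
  p ≠ q ∧ ∀ k : ℕ, ∑ i ∈ Finset.range k, p i ≤ ∑ i ∈ Finset.range k, q i

/-- The shape `λ(π)`: the transpose of the partition sorting the code of `π⁻¹`,
recorded as the weakly decreasing function `k ↦ λ(π)_{k+1}`. -/
noncomputable def affShape (n : ℕ) (π : Equiv.Perm ℤ) : ℕ → ℕ :=
  fun k => Multiset.countP (fun x => k < x)
    ((Finset.Icc (1 : ℤ) (n : ℤ)).val.map (codeEntry π⁻¹))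

/-- The shape `μ(z)`: the transpose of the partition sorting the involution code of `z`,
recorded as the weakly decreasing function `k ↦ μ(z)_{k+1}`. -/
noncomputable def invShape (n : ℕ) (z : Equiv.Perm ℤ) : ℕ → ℕ :=
  fun k => Multiset.countP (fun x => k < x)
    ((Finset.Icc (1 : ℤ) (n : ℤ)).val.map (icodeEntry z))

/-- The weakly decreasing rearrangement of a multiset of naturals, padded by zeros. -/
noncomputable def rearr (s : Multiset ℕ) : ℕ → ℕ :=
  fun k => ((s.sort (· ≤ ·)).reverse).getD k 0

/-- Remove the entries of a list of integers that repeat an earlier residue mod `n`. -/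
def dedupMod (n : ℕ) : List ℤ → List ℤ
  | [] => []
  | x :: xs => x :: dedupMod n (xs.filter fun y => (y - x) % (n : ℤ) ≠ 0)
termination_by l => l.length
decreasing_by
  simp only [List.length_cons]
  first
  | exact Nat.lt_succ_of_le (List.length_filter_le _ _)
  | exact Nat.lt_succ_of_le (by
      simp only [List.length_unattach]
      exact (List.length_filter_le _ _).trans_eq List.length_attach)

/-- The window `[[z(a₁), a₁, z(a₂), a₂, …]]` of `α_min(z)⁻¹`, where `a₁ < a₂ < ⋯`
are the elements `a ∈ [n]` with `a ≤ z(a)`. -/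
noncomputable def aminWindow (n : ℕ) (z : Equiv.Perm ℤ) : List ℤ :=
  dedupMod n
    ((((Finset.Icc (1 : ℤ) (n : ℤ)).sort (· ≤ ·)).filter fun a => a ≤ z a).flatMap
      fun a => [z a, a])

/-- Cyclically decreasing elements of `S̃_n`. -/
def IsCycDec (n : ℕ) (π : Equiv.Perm ℤ) : Prop :=
  ∃ w : List ℤ,
    (∀ x ∈ w, 1 ≤ x ∧ x ≤ (n : ℤ)) ∧ (w.map (affS n)).prod = π ∧
    w.length = wordLength n π ∧
    w.Pairwise fun a b => (a + 1 - b) % (n : ℤ) ≠ 0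

/-- The coefficient of the monomial `∏ₖ xₖ₊₁^(α k)` in Lam's affine Stanley symmetric
function `F_π`: the number of length-additive factorizations of `π` into cyclically
decreasing factors of lengths prescribed by `α`. -/
noncomputable def stanleyCoeff (n : ℕ) (π : Equiv.Perm ℤ) (α : ℕ →₀ ℕ) : ℕ :=
  Nat.card {f : ℕ → Equiv.Perm ℤ //
    (∀ k, IsCycDec n (f k)) ∧ (∀ k, wordLength n (f k) = α k) ∧
    (∑ k ∈ α.support, α k) = wordLength n π ∧
    ∃ N : ℕ, (∀ k, N ≤ k → f k = 1) ∧ ((List.range N).map f).prod = π}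

/-- The set `Φ⁻_r(y)` of Bruhat covers of `y` of the form `τⁿ_{i r}(y)` with `i < r`
and `i ∉ {r, y(r)} + nℤ`. -/
def PhiMinus (n : ℕ) (τ : ℤ → ℤ → Equiv.Perm ℤ → Equiv.Perm ℤ)
    (y : Equiv.Perm ℤ) (r : ℤ) : Set (Equiv.Perm ℤ) :=
  {z | BruhatCovI n y z ∧ ∃ i : ℤ, i < r ∧ (i - r) % (n : ℤ) ≠ 0 ∧
    (i - y r) % (n : ℤ) ≠ 0 ∧ z = τ i r y}

/-- The set `Φ⁺_r(y)` of Bruhat covers of `y` of the form `τⁿ_{r j}(y)` with `r < j`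
and `j ∉ {r, y(r)} + nℤ`. -/
def PhiPlus (n : ℕ) (τ : ℤ → ℤ → Equiv.Perm ℤ → Equiv.Perm ℤ)
    (y : Equiv.Perm ℤ) (r : ℤ) : Set (Equiv.Perm ℤ) :=
  {z | BruhatCovI n y z ∧ ∃ j : ℤ, r < j ∧ (j - r) % (n : ℤ) ≠ 0 ∧
    (j - y r) % (n : ℤ) ≠ 0 ∧ z = τ r j y}

/-- The affine symmetric group as a subtype of `Equiv.Perm ℤ`. -/
abbrev AffPerm (n : ℕ) := {π : Equiv.Perm ℤ // IsAffine n π}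

/-- The coproduct `Δ(π) = Σ_{π ≐ π'π''} π' ⊗ π''` on `ℚ S̃_n`. -/
noncomputable def affComul (n : ℕ) :
    (AffPerm n →₀ ℚ) →ₗ[ℚ] TensorProduct ℚ (AffPerm n →₀ ℚ) (AffPerm n →₀ ℚ) :=
  Finsupp.lift _ ℚ _ fun π : AffPerm n =>
    ∑ᶠ p ∈ {p : AffPerm n × AffPerm n |
        p.1.val * p.2.val = π.val ∧
        wordLength n π.val = wordLength n p.1.val + wordLength n p.2.val},
      (Finsupp.single p.1 (1 : ℚ)) ⊗ₜ[ℚ] (Finsupp.single p.2 (1 : ℚ))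

/-!
Write `σ = s_i`, `a = z i` and `b = z (i + 1)`. Since `σ` moves every integer by at most one, it
preserves the relative order of two integers unless it swaps them. Hence `j ↦ σ j` matches the
pairs counted by `ĉ_k(z)` with those counted by `ĉ_{σ k}(z')` (for `z' = σ z σ`, and for
`z' = z σ` in the commuting case `a = i + 1`), except for a few `j` (for `z' = σ z σ`: those with
`j = σ k`, `z j = σ (z k)` or `z j = σ k`), which are checked one by one using periodicity and
`z² = 1`. When `i < b`, the entries at `i` and `i + 1` are in addition related by
`ĉ_{i+1}(z) = ĉ_i(z) + [b ≠ i + 1]`.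
-/
open Function Equiv

theorem lt_iff_lt_of_abs_sub_le_one {σ : Perm ℤ} (hσ : ∀ x, |σ x - x| ≤ 1) {u v : ℤ}
    (huv : σ u ≠ v) : σ u < σ v ↔ u < v := by
  have hu := abs_le.1 (hσ u)
  have hv := abs_le.1 (hσ v)
  have hinj : σ u = σ v ↔ u = v := σ.injective.eq_iff
  omega

section Residues

variable {n : ℕ}

theorem apply_eq_add_sub_of_dvd {f : ℤ → ℤ} (hper : ∀ x : ℤ, f (x + n) = f x + n) {x y : ℤ}
    (h : (n : ℤ) ∣ y - x) : f y = f x + (y - x) := by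
  have hp : Periodic (fun x => f x - x) n := fun x => by
    show f (x + n) - (x + n) = f x - x
    rw [hper]; ring
  obtain ⟨m, hm⟩ := h
  have := hp.int_mul m x
  rw [Int.cast_id] at this
  rw [show y = x + m * n by linarith]
  linarith

theorem apply_eq_of_dvd_apply_sub {f : ℤ → ℤ} (hper : ∀ x : ℤ, f (x + n) = f x + n)
    (hinv : Involutive f) {x y : ℤ} (h : (n : ℤ) ∣ f x - y) : f y = x + y - f x := by
  have := apply_eq_add_sub_of_dvd hper h
  rw [hinv] at this
  linarith

theorem eq_of_dvd_sub_of_mem_Icc {x y : ℤ} (hx : x ∈ Set.Icc 1 (n : ℤ))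
    (hy : y ∈ Set.Icc 1 (n : ℤ)) (h : (n : ℤ) ∣ x - y) : x = y :=
  sub_eq_zero.1 <| Int.eq_zero_of_abs_lt_dvd h <| abs_lt.2 ⟨by linarith [hx.1, hy.2],
    by linarith [hx.2, hy.1]⟩

theorem ite_succ_mem_Icc_and_dvd_sub {i : ℤ} (hi1 : 1 ≤ i) (hi2 : i ≤ n) :
    (if i = (n : ℤ) then 1 else i + 1) ∈ Set.Icc 1 (n : ℤ) ∧
      (n : ℤ) ∣ (if i = (n : ℤ) then 1 else i + 1) - (i + 1) := by
  split_ifs with h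
  · exact ⟨⟨le_rfl, by omega⟩, ⟨-1, by rw [h]; ring⟩⟩
  · exact ⟨⟨by omega, by omega⟩, by simp⟩

end Residues

/-- `icodeEntry z k` is, by definition, the number of `j` with `IsIcodePair z k j`. -/
def IsIcodePair (z : Perm ℤ) (k j : ℤ) : Prop :=
  k < j ∧ z j < z k ∧ z j ≤ k

theorem not_isIcodePair_self (z : Perm ℤ) (k : ℤ) : ¬ IsIcodePair z k k :=
  fun h => lt_irrefl k h.1

section IcodeEntry

variable {f g : Perm ℤ} {k k' : ℤ}

theorem finite_setOf_isIcodePair {n : ℕ} (hn : 0 < n) (hper : ∀ x : ℤ, f (x + n) = f x + n)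
    (k : ℤ) : {j | IsIcodePair f k j}.Finite := by
  have hp : Periodic (fun x => x - f x) n := fun x => by
    show x + n - f (x + n) = x - f x
    rw [hper]; ring
  obtain ⟨C, hC⟩ := ((Set.finite_Ico (0 : ℤ) n).image fun x => x - f x).bddAbove
  refine (Set.finite_Ioc k (k + C)).subset fun j ⟨hkj, _, hjk⟩ => ⟨hkj, ?_⟩
  obtain ⟨y, hy, hjy⟩ := hp.exists_mem_Ico₀ (by exact_mod_cast hn) j
  have := hC ⟨y, hy, rfl⟩
  linarith

theorem icodeEntry_congr (τ : Perm ℤ) (h : ∀ j, IsIcodePair f k j ↔ IsIcodePair g k' (τ j)) :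
    icodeEntry f k = icodeEntry g k' :=
  Nat.card_congr (τ.subtypeEquiv h)

theorem icodeEntry_eq_add_one (τ : Perm ℤ) (hfin : {j | IsIcodePair f k j}.Finite) {p : ℤ}
    (hp : IsIcodePair f k p) (hp' : ¬ IsIcodePair g k' (τ p))
    (h : ∀ j, j ≠ p → (IsIcodePair f k j ↔ IsIcodePair g k' (τ j))) :
    icodeEntry f k = icodeEntry g k' + 1 := by
  have hg : icodeEntry g k' = ({j | IsIcodePair f k j} \ {p}).ncard := by
    rw [← Nat.card_coe_set_eq]
    refine (Nat.card_congr (τ.subtypeEquiv fun j => ?_)).symm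
    rw [Set.mem_sdiff, Set.mem_ofPred_eq, Set.mem_singleton_iff]
    by_cases hj : j = p
    · subst hj
      exact ⟨fun h => absurd rfl h.2, fun h => absurd h hp'⟩
    · rw [h j hj]
      exact and_iff_left hj
  rw [hg, Set.ncard_sdiff_singleton_add_one (show p ∈ {j | IsIcodePair f k j} from hp) hfin,
    ← Nat.card_coe_set_eq]
  rfl

theorem icodeEntry_eq_of_dvd_sub {n : ℕ} (hper : ∀ x : ℤ, f (x + n) = f x + n)
    (h : (n : ℤ) ∣ k' - k) : icodeEntry f k' = icodeEntry f k := by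
  refine icodeEntry_congr (Equiv.addRight (k - k')) fun j => ?_
  have e1 := apply_eq_add_sub_of_dvd hper (x := k) h
  have e2 := apply_eq_add_sub_of_dvd hper (x := j) (y := j + (k - k')) (by simpa using h.neg_right)
  simp only [IsIcodePair, coe_addRight]
  constructor <;> rintro ⟨h1, h2, h3⟩ <;> refine ⟨?_, ?_, ?_⟩ <;> linarith

end IcodeEntry

section SimpleReflection

variable {n : ℕ} {i x : ℤ}

theorem not_dvd_one_of_two_le (hn : 2 ≤ n) : ¬ (n : ℤ) ∣ 1 := fun h => by
  have := Int.le_of_dvd one_pos h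
  omega

theorem add_one_sub_emod_ne_zero (hn : 2 ≤ n) (i : ℤ) : ¬ (i + 1 - i) % (n : ℤ) = 0 := fun h =>
  not_dvd_one_of_two_le hn (by simpa using Int.dvd_of_emod_eq_zero h)

theorem affS_apply_eq_affTFun (hn : 2 ≤ n) (i x : ℤ) : affS n i x = affTFun n i (i + 1) x := by
  rw [affS, affT, dif_neg (add_one_sub_emod_ne_zero hn i)]
  rfl

theorem affS_apply_of_dvd (hn : 2 ≤ n) (h : (n : ℤ) ∣ x - i) : affS n i x = x + 1 := by
  rw [affS_apply_eq_affTFun hn, affTFun, if_pos (Int.emod_eq_zero_of_dvd h)]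
  ring

theorem affS_apply_of_dvd_succ (hn : 2 ≤ n) (h : (n : ℤ) ∣ x - (i + 1)) :
    affS n i x = x - 1 := by
  have h' : ¬ (x - i) % (n : ℤ) = 0 := fun h' =>
    not_dvd_one_of_two_le hn (by simpa using dvd_sub (Int.dvd_of_emod_eq_zero h') h)
  rw [affS_apply_eq_affTFun hn, affTFun, if_neg h', if_pos (Int.emod_eq_zero_of_dvd h)]
  ring

theorem affS_apply_of_not_dvd (hn : 2 ≤ n) (h1 : ¬ (n : ℤ) ∣ x - i)
    (h2 : ¬ (n : ℤ) ∣ x - (i + 1)) : affS n i x = x := by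
  rw [affS_apply_eq_affTFun hn, affTFun, if_neg (mt Int.dvd_of_emod_eq_zero h1),
    if_neg (mt Int.dvd_of_emod_eq_zero h2)]

theorem affS_apply_self (hn : 2 ≤ n) (i : ℤ) : affS n i i = i + 1 :=
  affS_apply_of_dvd hn (by simp)

theorem affS_apply_add_one (hn : 2 ≤ n) (i : ℤ) : affS n i (i + 1) = i := by
  rw [affS_apply_of_dvd_succ hn (by simp)]
  ring

theorem affS_involutive (hn : 2 ≤ n) (i : ℤ) : Involutive (affS n i) := fun x => by
  rw [affS_apply_eq_affTFun hn, affS_apply_eq_affTFun hn]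
  exact affTFun_involutive (add_one_sub_emod_ne_zero hn i) x

theorem abs_affS_apply_sub_le_one (hn : 2 ≤ n) (i x : ℤ) : |affS n i x - x| ≤ 1 := by
  by_cases h1 : (n : ℤ) ∣ x - i
  · simp [affS_apply_of_dvd hn h1]
  by_cases h2 : (n : ℤ) ∣ x - (i + 1)
  · simp [affS_apply_of_dvd_succ hn h2]
  · simp [affS_apply_of_not_dvd hn h1 h2]

theorem dvd_sub_of_affS_apply_eq_add_one (hn : 2 ≤ n) (h : affS n i x = x + 1) :
    (n : ℤ) ∣ x - i := by
  by_contra h1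
  by_cases h2 : (n : ℤ) ∣ x - (i + 1)
  · rw [affS_apply_of_dvd_succ hn h2] at h; omega
  · rw [affS_apply_of_not_dvd hn h1 h2] at h; omega

theorem dvd_sub_of_affS_apply_eq_sub_one (hn : 2 ≤ n) (h : affS n i x = x - 1) :
    (n : ℤ) ∣ x - (i + 1) := by
  by_contra h2
  by_cases h1 : (n : ℤ) ∣ x - i
  · rw [affS_apply_of_dvd hn h1] at h; omega
  · rw [affS_apply_of_not_dvd hn h1 h2] at h; omega

theorem affS_apply_add_natCast (hn : 2 ≤ n) (i x : ℤ) : affS n i (x + n) = affS n i x + n := by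
  have e : ∀ c, (n : ℤ) ∣ x + n - c ↔ (n : ℤ) ∣ x - c := fun c => by
    rw [show x + n - c = x - c + n by ring, dvd_add_self_right]
  by_cases h1 : (n : ℤ) ∣ x - i
  · rw [affS_apply_of_dvd hn h1, affS_apply_of_dvd hn ((e i).2 h1)]; ring
  by_cases h2 : (n : ℤ) ∣ x - (i + 1)
  · rw [affS_apply_of_dvd_succ hn h2, affS_apply_of_dvd_succ hn ((e _).2 h2)]; ring
  · rw [affS_apply_of_not_dvd hn h1 h2, affS_apply_of_not_dvd hn (mt (e _).1 h1) (mt (e _).1 h2)]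

theorem lt_affS_apply_iff (hn : 2 ≤ n) {m : ℤ} (hm : ¬ (n : ℤ) ∣ m - i) :
    m < affS n i x ↔ m < x := by
  by_cases h1 : (n : ℤ) ∣ x - i
  · have : m ≠ x := fun h => hm (h ▸ h1)
    rw [affS_apply_of_dvd hn h1]; omega
  by_cases h2 : (n : ℤ) ∣ x - (i + 1)
  · have : m ≠ x - 1 := fun h => hm (by rwa [h, sub_sub, add_comm 1 i])
    rw [affS_apply_of_dvd_succ hn h2]; omega
  · rw [affS_apply_of_not_dvd hn h1 h2]

end SimpleReflection

section Transfer

variable {σ z : Perm ℤ} {k j : ℤ}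

theorem isIcodePair_conj_iff (hσ : ∀ x, |σ x - x| ≤ 1) (hσσ : Involutive σ)
    (h1 : j ≠ σ k) (h2 : z j ≠ σ (z k)) (h3 : z j ≠ σ k) :
    IsIcodePair (σ * z * σ) (σ k) (σ j) ↔ IsIcodePair z k j := by
  have h2' : σ (z j) ≠ z k := fun h => h2 (by rw [← h, hσσ])
  simp only [IsIcodePair, Perm.mul_apply, hσσ _]
  rw [lt_iff_lt_of_abs_sub_le_one hσ h1.symm, lt_iff_lt_of_abs_sub_le_one hσ h2', ← not_lt,
    lt_iff_lt_of_abs_sub_le_one hσ h3.symm, not_lt]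

theorem isIcodePair_iff_conj (hσ : ∀ x, |σ x - x| ≤ 1) (hσσ : Involutive σ)
    (h : j = σ k ∨ z j = σ (z k) ∨ z j = σ k →
      (IsIcodePair z k j ↔ IsIcodePair (σ * z * σ) (σ k) (σ j))) :
    IsIcodePair z k j ↔ IsIcodePair (σ * z * σ) (σ k) (σ j) := by
  by_cases hj : j = σ k ∨ z j = σ (z k) ∨ z j = σ k
  · exact h hj
  · push Not at hj
    exact (isIcodePair_conj_iff hσ hσσ hj.1 hj.2.1 hj.2.2).symm

theorem icodeEntry_conj_eq (hσ : ∀ x, |σ x - x| ≤ 1) (hσσ : Involutive σ)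
    (h : ∀ j, j = σ k ∨ z j = σ (z k) ∨ z j = σ k →
      (IsIcodePair z k j ↔ IsIcodePair (σ * z * σ) (σ k) (σ j))) :
    icodeEntry (σ * z * σ) (σ k) = icodeEntry z k :=
  (icodeEntry_congr σ fun j => isIcodePair_iff_conj hσ hσσ (h j)).symm

theorem icodeEntry_eq_conj_add_one (hσ : ∀ x, |σ x - x| ≤ 1) (hσσ : Involutive σ)
    (hfin : {j | IsIcodePair z k j}.Finite) {p : ℤ} (hp : IsIcodePair z k p)
    (hp' : ¬ IsIcodePair (σ * z * σ) (σ k) (σ p))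
    (h : ∀ j, j ≠ p → j = σ k ∨ z j = σ (z k) ∨ z j = σ k →
      (IsIcodePair z k j ↔ IsIcodePair (σ * z * σ) (σ k) (σ j))) :
    icodeEntry z k = icodeEntry (σ * z * σ) (σ k) + 1 :=
  icodeEntry_eq_add_one σ hfin hp hp' fun j hjp => isIcodePair_iff_conj hσ hσσ (h j hjp)

theorem isIcodePair_conj_apply_iff (hσ : ∀ x, |σ x - x| ≤ 1) (hσσ : Involutive σ)
    (hz : Involutive z) (hk : σ k = k) :
    IsIcodePair z k (z k) ↔ IsIcodePair (σ * z * σ) (σ k) (σ (z k)) := by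
  simp only [IsIcodePair, Perm.mul_apply, hσσ _, hz k, hk]
  by_cases hzk : z k = k
  · rw [hzk, hk]
  · have := lt_iff_lt_of_abs_sub_le_one hσ (u := k) (v := z k) (by rwa [hk, ne_comm])
    rw [hk] at this
    rw [this]

theorem isIcodePair_mul_iff (hσ : ∀ x, |σ x - x| ≤ 1) (hσσ : Involutive σ) (h1 : j ≠ σ k)
    (h2 : z j ≤ σ k ↔ z j ≤ k) :
    IsIcodePair (z * σ) (σ k) (σ j) ↔ IsIcodePair z k j := by
  simp only [IsIcodePair, Perm.mul_apply, hσσ _, h2, lt_iff_lt_of_abs_sub_le_one hσ h1.symm]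

theorem icodeEntry_mul_of_apply_eq_self (hσ : ∀ x, |σ x - x| ≤ 1) (hσσ : Involutive σ)
    (hk : σ k = k) : icodeEntry (z * σ) k = icodeEntry z k := by
  refine (icodeEntry_congr σ fun j => ?_).symm
  by_cases hj : j = k
  · subst hj
    rw [hk]
    exact iff_of_false (not_isIcodePair_self _ _) (not_isIcodePair_self _ _)
  · have := isIcodePair_mul_iff (z := z) hσ hσσ (k := k) (j := j) (by rwa [hk]) (by rw [hk])
    rw [hk] at this
    exact this.symm

end Transfer

section AdjacentEntries

variable {z : Perm ℤ} {i : ℤ}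

theorem icodeEntry_self_eq_succ_of_apply_succ (ha : i < z i) (hb : z (i + 1) = i + 1) :
    icodeEntry z i = icodeEntry z (i + 1) :=
  icodeEntry_congr (Equiv.refl ℤ) fun j => by
    have h1 : j = i + 1 → z j = i + 1 := fun h => h ▸ hb
    have h2 : z j = i + 1 → j = i + 1 := fun h => z.injective (h.trans hb.symm)
    simp only [IsIcodePair, Equiv.refl_apply, hb]
    omega

theorem icodeEntry_succ_eq_self_add_one_of_lt {n : ℕ} (hn : 0 < n)
    (hper : ∀ x : ℤ, z (x + n) = z x + n) (hinv : Involutive z) (hdes : z (i + 1) < z i)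
    (hb : i + 1 < z (i + 1)) :
    icodeEntry z (i + 1) = icodeEntry z i + 1 := by
  have hzb : z (z (i + 1)) = i + 1 := hinv _
  refine icodeEntry_eq_add_one (Equiv.refl ℤ) (finite_setOf_isIcodePair hn hper (i + 1))
    (p := z (i + 1)) ⟨hb, by omega, by omega⟩ (fun h => by have := h.2.2; rw [Equiv.refl_apply, hzb] at this; omega)
    fun j hj => ?_
  have h1 : z j ≠ i + 1 := fun h => hj (by rw [← h, hinv])
  have h2 : j = i + 1 → z j = z (i + 1) := fun h => h ▸ rfl
  simp only [IsIcodePair, Equiv.refl_apply]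
  omega

end AdjacentEntries

section Commuting

variable {n : ℕ} {z : Perm ℤ} {i : ℤ}

theorem apply_eq_of_commute_affS (hn : 2 ≤ n) (hper : ∀ x : ℤ, z (x + n) = z x + n)
    (hinv : Involutive z) (hcom : Commute z (affS n i)) (hdes : z (i + 1) < z i) :
    z i = i + 1 ∧ z (i + 1) = i := by
  have h : z (i + 1) = affS n i (z i) := by
    simpa [Perm.mul_apply, affS_apply_self hn] using congr($hcom i)
  by_cases hd : affS n i (z i) = z i - 1
  · have := apply_eq_of_dvd_apply_sub hper hinv (dvd_sub_of_affS_apply_eq_sub_one hn hd)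
    omega
  · have := abs_le.1 (abs_affS_apply_sub_le_one hn i (z i))
    omega

theorem commute_affS_of_apply_eq (hn : 2 ≤ n) (hper : ∀ x : ℤ, z (x + n) = z x + n)
    (hinv : Involutive z) (h : z i = i + 1) : Commute z (affS n i) := by
  have h' : z (i + 1) = i := by rw [← h, hinv]
  ext x
  change z (affS n i x) = affS n i (z x)
  by_cases h1 : (n : ℤ) ∣ x - i
  · have e1 := apply_eq_add_sub_of_dvd hper (x := i + 1) (y := x + 1) (by simpa using h1)
    have e2 := apply_eq_add_sub_of_dvd hper h1
    rw [affS_apply_of_dvd hn h1, e1, e2, h, h', affS_apply_of_dvd_succ hn (by simpa using h1)]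
    ring
  by_cases h2 : (n : ℤ) ∣ x - (i + 1)
  · have e1 := apply_eq_add_sub_of_dvd hper (x := i) (y := x - 1) (by rwa [sub_sub, add_comm 1])
    have e2 := apply_eq_add_sub_of_dvd hper h2
    rw [affS_apply_of_dvd_succ hn h2, e1, e2, h, h', affS_apply_of_dvd hn (by simpa using h2)]
    ring
  · have h3 : ¬ (n : ℤ) ∣ z x - i := fun hd => by
      have := apply_eq_of_dvd_apply_sub hper hinv hd
      exact h2 (by rw [show x - (i + 1) = z x - i by omega]; exact hd)
    have h4 : ¬ (n : ℤ) ∣ z x - (i + 1) := fun hd => by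
      have := apply_eq_of_dvd_apply_sub hper hinv hd
      exact h1 (by rw [show x - i = z x - (i + 1) by omega]; exact hd)
    rw [affS_apply_of_not_dvd hn h1 h2, affS_apply_of_not_dvd hn h3 h4]

theorem icodeEntry_mul_affS_self (hn : 2 ≤ n) (hinv : Involutive z) (ha : z i = i + 1) :
    icodeEntry (z * affS n i) i = icodeEntry z (i + 1) := by
  have hb : z (i + 1) = i := by rw [← ha, hinv]
  have hσ := abs_affS_apply_sub_le_one hn i
  have hσσ := affS_involutive hn i
  have key := icodeEntry_congr (f := z) (g := z * affS n i) (k := i + 1)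
    (k' := affS n i (i + 1)) (affS n i) fun j => ?_
  · rw [affS_apply_add_one hn] at key
    exact key.symm
  by_cases hj : j = i
  · subst hj
    simp only [IsIcodePair, Perm.mul_apply, affS_apply_self hn, affS_apply_add_one hn, ha, hb]
    omega
  · have hzj : z j ≠ i + 1 := fun h => hj (by rw [← hinv j, h, hb])
    refine (isIcodePair_mul_iff hσ hσσ (by rwa [affS_apply_add_one hn]) ?_).symm
    rw [affS_apply_add_one hn]
    omega

theorem icodeEntry_eq_mul_affS_succ_add_one (hn : 2 ≤ n) (hper : ∀ x : ℤ, z (x + n) = z x + n)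
    (hinv : Involutive z) (ha : z i = i + 1) :
    icodeEntry z i = icodeEntry (z * affS n i) (i + 1) + 1 := by
  have hb : z (i + 1) = i := by rw [← ha, hinv]
  have hσ := abs_affS_apply_sub_le_one hn i
  have hσσ := affS_involutive hn i
  refine icodeEntry_eq_add_one (affS n i) (finite_setOf_isIcodePair (by omega) hper i)
    (p := i + 1) ⟨by omega, by omega, by omega⟩ ?_ fun j hj => ?_
  · simp only [IsIcodePair, affS_apply_add_one hn]
    omega
  by_cases hji : j = i
  · subst hji
    simp only [IsIcodePair, Perm.mul_apply, affS_apply_self hn, affS_apply_add_one hn, ha]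
    omega
  · have hzj : z j ≠ i + 1 := fun h => hji (by rw [← hinv j, h, hb])
    have := isIcodePair_mul_iff (z := z) hσ hσσ (k := i) (j := j) (by rwa [affS_apply_self hn])
      (by rw [affS_apply_self hn]; omega)
    rw [affS_apply_self hn] at this
    exact this.symm

end Commuting

section Conjugation

variable {n : ℕ} {z : Perm ℤ} {i : ℤ}

theorem icodeEntry_conj_affS_self_of_lt (hn : 2 ≤ n) (hper : ∀ x : ℤ, z (x + n) = z x + n)
    (hinv : Involutive z) (hdes : z (i + 1) < z i) (hvis : z (i + 1) < i) :
    icodeEntry (affS n i * z * affS n i) i = icodeEntry z (i + 1) := by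
  have hσ := abs_affS_apply_sub_le_one hn i
  have hσσ := affS_involutive hn i
  have key := icodeEntry_conj_eq (z := z) (k := i + 1) hσ hσσ ?_
  · rwa [affS_apply_add_one hn] at key
  have hb := abs_le.1 (hσ (z (i + 1)))
  rw [affS_apply_add_one hn]
  rintro j (hj | hj | hj) <;>
    simp only [IsIcodePair, Perm.mul_apply, hσσ _, affS_apply_self hn]
  · rw [hj]
    have ha := abs_le.1 (hσ (z i))
    have hne : affS n i (z i) ≠ affS n i (z (i + 1)) := hσσ.injective.ne hdes.ne'
    have hsb : affS n i (z (i + 1)) = z (i + 1) + 1 → z i = 2 * i + 1 - z (i + 1) := fun h => by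
      have := apply_eq_of_dvd_apply_sub hper hinv (dvd_sub_of_affS_apply_eq_add_one hn h)
      omega
    omega
  · have hsb : affS n i (z (i + 1)) ≠ z (i + 1) - 1 := fun h => by
      have := apply_eq_of_dvd_apply_sub hper hinv (dvd_sub_of_affS_apply_eq_sub_one hn h)
      omega
    have hjb : affS n i (z (i + 1)) = z (i + 1) + 1 → j = 2 * z (i + 1) - i := fun h => by
      have := apply_eq_add_sub_of_dvd hper (x := i + 1) (y := affS n i (z (i + 1)))
        (by rw [h, add_sub_add_right_eq_sub]; exact dvd_sub_of_affS_apply_eq_add_one hn h)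
      rw [← hinv j, hj]
      omega
    have hσj := abs_le.1 (hσ j)
    have hzj : affS n i (z j) = z (i + 1) := by rw [hj, hσσ]
    omega
  · have hzj : affS n i (z j) = i + 1 := by rw [hj, affS_apply_self hn]
    omega

theorem icodeEntry_eq_conj_affS_succ_add_one_of_lt (hn : 2 ≤ n)
    (hper : ∀ x : ℤ, z (x + n) = z x + n) (hinv : Involutive z) (hdes : z (i + 1) < z i)
    (hvis : z (i + 1) < i) :
    icodeEntry z i = icodeEntry (affS n i * z * affS n i) (i + 1) + 1 := by
  have hσ := abs_affS_apply_sub_le_one hn i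
  have hσσ := affS_involutive hn i
  have key := icodeEntry_eq_conj_add_one (z := z) (k := i) hσ hσσ
    (finite_setOf_isIcodePair (by omega) hper i) (p := i + 1) ⟨by omega, hdes, hvis.le⟩ ?_ ?_
  · rwa [affS_apply_self hn] at key
  · rw [affS_apply_self hn, affS_apply_add_one hn]
    exact fun h => by have := h.1; omega
  have ha := abs_le.1 (hσ (z i))
  have hb := abs_le.1 (hσ (z (i + 1)))
  rw [affS_apply_self hn]
  rintro j hjp (hj | hj | hj)
  · exact absurd hj hjp
  · have hsa : affS n i (z i) = z i - 1 → z (i + 1) = 2 * i + 1 - z i := fun h => by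
      have := apply_eq_of_dvd_apply_sub hper hinv (dvd_sub_of_affS_apply_eq_sub_one hn h)
      omega
    have hja : affS n i (z i) = z i + 1 → j = z (i + 1) := fun h => by
      have := apply_eq_of_dvd_apply_sub hper hinv (dvd_sub_of_affS_apply_eq_add_one hn h)
      rw [← hinv j, hj, h, show z i + 1 = i + 1 by omega]
    have hσj := abs_le.1 (hσ j)
    have hzj : affS n i (z j) = z i := by rw [hj, hσσ]
    simp only [IsIcodePair, Perm.mul_apply, hσσ _, affS_apply_add_one hn]
    omega
  · have hjb : j = z (i + 1) := by rw [← hj, hinv]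
    have hσj := abs_le.1 (hσ j)
    simp only [IsIcodePair, Perm.mul_apply, hσσ _, affS_apply_add_one hn]
    omega

theorem icodeEntry_succ_eq_conj_affS_self_add_one (hn : 2 ≤ n)
    (hper : ∀ x : ℤ, z (x + n) = z x + n) (hinv : Involutive z) (hdes : z (i + 1) < z i)
    (hb : i < z (i + 1)) :
    icodeEntry z (i + 1) = icodeEntry (affS n i * z * affS n i) i + 1 := by
  have hσ := abs_affS_apply_sub_le_one hn i
  have hσσ := affS_involutive hn i
  have hza : z (z i) = i := hinv i
  have key := icodeEntry_eq_conj_add_one (z := z) (k := i + 1) hσ hσσ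
    (finite_setOf_isIcodePair (by omega) hper (i + 1)) (p := z i) ⟨by omega, by omega, by omega⟩
    ?_ ?_
  · rwa [affS_apply_add_one hn] at key
  · simp only [IsIcodePair, Perm.mul_apply, hσσ _, affS_apply_add_one hn, hza, affS_apply_self hn]
    omega
  have ha := abs_le.1 (hσ (z i))
  rw [affS_apply_add_one hn]
  rintro j hjp (hj | hj | hj)
  · rw [hj]
    simp only [IsIcodePair, Perm.mul_apply, affS_apply_self hn, affS_apply_add_one hn]
    omega
  · have hsb : affS n i (z (i + 1)) ≠ z (i + 1) - 1 := fun h => hjp <| by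
      have := apply_eq_of_dvd_apply_sub hper hinv (dvd_sub_of_affS_apply_eq_sub_one hn h)
      rw [← hinv j, hj, h, show z (i + 1) - 1 = i by omega]
    have hb' := abs_le.1 (hσ (z (i + 1)))
    have hzj : affS n i (z j) = z (i + 1) := by rw [hj, hσσ]
    simp only [IsIcodePair, Perm.mul_apply, hσσ _, affS_apply_self hn]
    omega
  · exact absurd (by rw [← hinv j, hj]) hjp

theorem icodeEntry_conj_affS_succ_of_lt (hn : 2 ≤ n) (hdes : z (i + 1) < z i)
    (hb : i < z (i + 1)) :
    icodeEntry (affS n i * z * affS n i) (i + 1) = icodeEntry z (i + 1) := by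
  have hσσ := affS_involutive hn i
  have hm : ¬ (n : ℤ) ∣ i + 1 - i := by simpa using not_dvd_one_of_two_le hn
  have ha : i + 1 < affS n i (z i) := by
    have := abs_le.1 (abs_affS_apply_sub_le_one hn i (z i))
    have : affS n i (z i) ≠ affS n i i := hσσ.injective.ne (by omega)
    rw [affS_apply_self hn] at this
    omega
  refine (icodeEntry_congr (affS n i) fun j => ?_).symm
  have h1 := lt_affS_apply_iff hn hm (x := j)
  have h2 := lt_affS_apply_iff hn hm (x := z j)
  have h3 : z j = z (i + 1) ↔ j = i + 1 := z.injective.eq_iff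
  simp only [IsIcodePair, Perm.mul_apply, hσσ _, affS_apply_add_one hn]
  omega

end Conjugation

section FixedPositions

variable {n : ℕ} {z : Perm ℤ} {i k : ℤ}

theorem isIcodePair_conj_affS_of_dvd_apply_sub (hn : 2 ≤ n)
    (hper : ∀ x : ℤ, z (x + n) = z x + n) (hinv : Involutive z) (hdes : z (i + 1) < z i)
    (hk : affS n i k = k) (hzk : (n : ℤ) ∣ z k - (i + 1)) {j : ℤ}
    (hj : z j = affS n i (z k)) :
    (IsIcodePair z k j ↔ i ≤ z (i + 1)) ∧
      ¬ IsIcodePair (affS n i * z * affS n i) (affS n i k) (affS n i j) := by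
  have hσσ := affS_involutive hn i
  have e1 : affS n i (z k) = z k - 1 := affS_apply_of_dvd_succ hn hzk
  have e2 : affS n i (z j) = z k := by rw [hj, hσσ]
  have hb := apply_eq_of_dvd_apply_sub hper hinv hzk
  have ha := apply_eq_of_dvd_apply_sub hper hinv (x := j) (y := i)
    (by rwa [hj, e1, sub_sub, add_comm 1 i])
  simp only [IsIcodePair, Perm.mul_apply, hσσ _, hk]
  omega

theorem icodeEntry_conj_affS_of_apply_eq_self (hn : 2 ≤ n)
    (hper : ∀ x : ℤ, z (x + n) = z x + n) (hinv : Involutive z) (hdes : z (i + 1) < z i)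
    (hk : affS n i k = k) (hvis : (n : ℤ) ∣ z k - (i + 1) → z (i + 1) < i) :
    icodeEntry (affS n i * z * affS n i) k = icodeEntry z k := by
  have hσ := abs_affS_apply_sub_le_one hn i
  have hσσ := affS_involutive hn i
  have key := icodeEntry_conj_eq (z := z) (k := k) hσ hσσ ?_
  · rwa [hk] at key
  rintro j (hj | hj | hj)
  · simp only [hj, hk]
    exact iff_of_false (not_isIcodePair_self _ _) (not_isIcodePair_self _ _)
  · by_cases hzk : (n : ℤ) ∣ z k - (i + 1)
    · obtain ⟨h1, h2⟩ := isIcodePair_conj_affS_of_dvd_apply_sub hn hper hinv hdes hk hzk hj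
      exact iff_of_false (fun h => by have := h1.1 h; have := hvis hzk; omega) h2
    by_cases hzk' : (n : ℤ) ∣ z k - i
    · have e1 : affS n i (z k) = z k + 1 := affS_apply_of_dvd hn hzk'
      have ha := apply_eq_of_dvd_apply_sub hper hinv hzk'
      have hb := apply_eq_of_dvd_apply_sub hper hinv (x := j) (y := i + 1)
        (by rw [hj, e1, add_sub_add_right_eq_sub]; exact hzk')
      have hσj := abs_le.1 (hσ j)
      simp only [IsIcodePair, Perm.mul_apply, hσσ _, hk]
      omega
    · rw [affS_apply_of_not_dvd hn hzk' hzk] at hj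
      rw [z.injective hj, hk]
      exact iff_of_false (not_isIcodePair_self _ _) (not_isIcodePair_self _ _)
  · obtain rfl : j = z k := by rw [← hinv j, hj, hk]
    exact isIcodePair_conj_apply_iff hσ hσσ hinv hk

theorem icodeEntry_eq_conj_affS_add_one_of_dvd (hn : 2 ≤ n)
    (hper : ∀ x : ℤ, z (x + n) = z x + n) (hinv : Involutive z) (hdes : z (i + 1) < z i)
    (hk : affS n i k = k) (hzk : (n : ℤ) ∣ z k - (i + 1)) (hb : i < z (i + 1)) :
    icodeEntry z k = icodeEntry (affS n i * z * affS n i) k + 1 := by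
  have hσ := abs_affS_apply_sub_le_one hn i
  have hσσ := affS_involutive hn i
  obtain ⟨h1, h2⟩ := isIcodePair_conj_affS_of_dvd_apply_sub hn hper hinv hdes hk hzk
    (hinv (affS n i (z k)))
  have key := icodeEntry_eq_conj_add_one hσ hσσ (finite_setOf_isIcodePair (by omega) hper k)
    (h1.2 hb.le) h2 ?_
  · rwa [hk] at key
  rintro j hjp (hj | hj | hj)
  · simp only [hj, hk]
    exact iff_of_false (not_isIcodePair_self _ _) (not_isIcodePair_self _ _)
  · exact absurd (by rw [← hinv j, hj]) hjp
  · obtain rfl : j = z k := by rw [← hinv j, hj, hk]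
    exact isIcodePair_conj_apply_iff hσ hσσ hinv hk

end FixedPositions

section Descent

variable {n : ℕ} {z : Perm ℤ} {i : ℤ}

theorem mul_apply_add_natCast {f g : Perm ℤ} (hf : ∀ x : ℤ, f (x + n) = f x + n)
    (hg : ∀ x : ℤ, g (x + n) = g x + n) (x : ℤ) : (f * g) (x + n) = (f * g) x + n := by
  simp only [Perm.mul_apply, hg, hf]

theorem two_le_of_apply_succ_lt (hn : 0 < n) (hper : ∀ x : ℤ, z (x + n) = z x + n)
    (hinv : Involutive z) (hdes : z (i + 1) < z i) : 2 ≤ n := by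
  by_contra! h
  obtain rfl : n = 1 := by omega
  have h1 := apply_eq_add_sub_of_dvd hper (x := i) (y := z i) (by simp)
  have h2 := apply_eq_add_sub_of_dvd hper (x := i) (y := i + 1) (by simp)
  rw [hinv] at h1
  omega

theorem icodeEntry_mul_affS_of_commute (hn : 2 ≤ n) (hper : ∀ x : ℤ, z (x + n) = z x + n)
    (hinv : Involutive z) (hcom : Commute z (affS n i)) (hdes : z (i + 1) < z i) :
    icodeEntry (z * affS n i) i = icodeEntry z (i + 1) ∧
      icodeEntry (z * affS n i) (i + 1) = icodeEntry z i - 1 ∧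
      ∀ k, ¬ (n : ℤ) ∣ k - i → ¬ (n : ℤ) ∣ k - (i + 1) →
        icodeEntry (z * affS n i) k = icodeEntry z k := by
  have ha := (apply_eq_of_commute_affS hn hper hinv hcom hdes).1
  refine ⟨icodeEntry_mul_affS_self hn hinv ha, ?_, fun k h1 h2 =>
    icodeEntry_mul_of_apply_eq_self (abs_affS_apply_sub_le_one hn i) (affS_involutive hn i)
      (affS_apply_of_not_dvd hn h1 h2)⟩
  have := icodeEntry_eq_mul_affS_succ_add_one hn hper hinv ha
  omega

theorem icodeEntry_conj_affS_of_le (hn : 2 ≤ n) (hper : ∀ x : ℤ, z (x + n) = z x + n)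
    (hinv : Involutive z) (hncom : ¬ Commute z (affS n i)) (hdes : z (i + 1) < z i)
    (hvis : z (i + 1) ≤ i) :
    icodeEntry (affS n i * z * affS n i) i = icodeEntry z (i + 1) ∧
      icodeEntry (affS n i * z * affS n i) (i + 1) = icodeEntry z i - 1 ∧
      ∀ k, ¬ (n : ℤ) ∣ k - i → ¬ (n : ℤ) ∣ k - (i + 1) →
        icodeEntry (affS n i * z * affS n i) k = icodeEntry z k := by
  have hbi : z (i + 1) < i := lt_of_le_of_ne hvis fun h =>
    hncom (commute_affS_of_apply_eq hn hper hinv (by simpa [h] using hinv (i + 1)))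
  refine ⟨icodeEntry_conj_affS_self_of_lt hn hper hinv hdes hbi, ?_, fun k h1 h2 =>
    icodeEntry_conj_affS_of_apply_eq_self hn hper hinv hdes (affS_apply_of_not_dvd hn h1 h2)
      fun _ => hbi⟩
  have := icodeEntry_eq_conj_affS_succ_add_one_of_lt hn hper hinv hdes hbi
  omega

theorem icodeEntry_conj_affS_of_apply_succ_eq (hn : 2 ≤ n)
    (hper : ∀ x : ℤ, z (x + n) = z x + n) (hinv : Involutive z) (hdes : z (i + 1) < z i)
    (hb : z (i + 1) = i + 1) :
    icodeEntry (affS n i * z * affS n i) i = icodeEntry z i - 1 ∧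
      ∀ k, ¬ (n : ℤ) ∣ k - i →
        icodeEntry (affS n i * z * affS n i) k = icodeEntry z k := by
  have hper' := mul_apply_add_natCast (mul_apply_add_natCast (affS_apply_add_natCast hn i) hper)
    (affS_apply_add_natCast hn i)
  refine ⟨?_, fun k hki => ?_⟩
  · have := icodeEntry_succ_eq_conj_affS_self_add_one hn hper hinv hdes (by omega)
    have := icodeEntry_self_eq_succ_of_apply_succ (by omega) hb
    omega
  by_cases hk : (n : ℤ) ∣ k - (i + 1)
  · rw [icodeEntry_eq_of_dvd_sub hper hk, icodeEntry_eq_of_dvd_sub hper' hk]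
    exact icodeEntry_conj_affS_succ_of_lt hn hdes (by omega)
  refine icodeEntry_conj_affS_of_apply_eq_self hn hper hinv hdes
    (affS_apply_of_not_dvd hn hki hk) fun hzk => absurd ?_ hk
  have := apply_eq_of_dvd_apply_sub hper hinv hzk
  rwa [show k = z k by omega]

theorem icodeEntry_conj_affS_of_succ_lt (hn : 2 ≤ n) (hper : ∀ x : ℤ, z (x + n) = z x + n)
    (hinv : Involutive z) (hdes : z (i + 1) < z i) (hb : i + 1 < z (i + 1)) :
    (∀ k, (n : ℤ) ∣ k - z (i + 1) →
        icodeEntry (affS n i * z * affS n i) k = icodeEntry z k - 1) ∧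
      ∀ k, ¬ (n : ℤ) ∣ k - z (i + 1) →
        icodeEntry (affS n i * z * affS n i) k = icodeEntry z k := by
  have hper' := mul_apply_add_natCast (mul_apply_add_natCast (affS_apply_add_natCast hn i) hper)
    (affS_apply_add_natCast hn i)
  refine ⟨fun k hk => ?_, fun k hk => ?_⟩
  · rw [icodeEntry_eq_of_dvd_sub hper hk, icodeEntry_eq_of_dvd_sub hper' hk]
    have hσb : affS n i (z (i + 1)) = z (i + 1) := by
      refine affS_apply_of_not_dvd hn (fun h => ?_) (fun h => ?_)
      · have := apply_eq_of_dvd_apply_sub hper hinv (x := i + 1) h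
        omega
      · have := apply_eq_of_dvd_apply_sub hper hinv (x := i + 1) h
        omega
    have := icodeEntry_eq_conj_affS_add_one_of_dvd hn hper hinv hdes hσb
      (by rw [hinv]; simp) (by omega)
    omega
  by_cases hki : (n : ℤ) ∣ k - i
  · rw [icodeEntry_eq_of_dvd_sub hper hki, icodeEntry_eq_of_dvd_sub hper' hki]
    have := icodeEntry_succ_eq_conj_affS_self_add_one hn hper hinv hdes (by omega)
    have := icodeEntry_succ_eq_self_add_one_of_lt (by omega) hper hinv hdes hb
    omega
  by_cases hki' : (n : ℤ) ∣ k - (i + 1)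
  · rw [icodeEntry_eq_of_dvd_sub hper hki', icodeEntry_eq_of_dvd_sub hper' hki']
    exact icodeEntry_conj_affS_succ_of_lt hn hdes (by omega)
  refine icodeEntry_conj_affS_of_apply_eq_self hn hper hinv hdes
    (affS_apply_of_not_dvd hn hki hki') fun hzk => absurd ?_ hk
  have := apply_eq_of_dvd_apply_sub hper hinv hzk
  rwa [show k - z (i + 1) = z k - (i + 1) by omega]

end Descent

theorem icode_of_demazure_descent_general (n : ℕ)
    (z z' : Equiv.Perm ℤ) (hz : IsAffine n z) (hzi : z⁻¹ = z)
    (i : ℤ) (hi1 : 1 ≤ i) (hi2 : i ≤ n) (hdes : z (i + 1) < z i)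
    (hz' : (z * affS n i = affS n i * z ∧ z' = z * affS n i) ∨
           (z * affS n i ≠ affS n i * z ∧ z' = affS n i * z * affS n i)) :
    (z (i + 1) ≤ i →
        icodeEntry z' i = icodeEntry z (if i = (n : ℤ) then 1 else i + 1) ∧
        icodeEntry z' (if i = (n : ℤ) then 1 else i + 1) = icodeEntry z i - 1 ∧
        ∀ k : ℤ, 1 ≤ k → k ≤ n → k ≠ i → k ≠ (if i = (n : ℤ) then 1 else i + 1) →
          icodeEntry z' k = icodeEntry z k) ∧
    (i < z (i + 1) → z (i + 1) = i + 1 →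
      icodeEntry z' i = icodeEntry z i - 1 ∧
      ∀ k : ℤ, 1 ≤ k → k ≤ n → k ≠ i → icodeEntry z' k = icodeEntry z k) ∧
    (i < z (i + 1) → z (i + 1) ≠ i + 1 →
      ∀ j : ℤ, 1 ≤ j → j ≤ n → j ≠ i → (z (i + 1) - j) % (n : ℤ) = 0 →
        icodeEntry z' j = icodeEntry z j - 1 ∧
        ∀ k : ℤ, 1 ≤ k → k ≤ n → k ≠ j → icodeEntry z' k = icodeEntry z k) := by
  have hper := hz.1
  have hinv : Involutive z := fun x => (Perm.inv_eq_iff_eq.1 (by rw [hzi])).symm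
  have hn := two_le_of_apply_succ_lt (by omega) hper hinv hdes
  have hσper := affS_apply_add_natCast hn i
  obtain ⟨hip, hipd⟩ := ite_succ_mem_Icc_and_dvd_sub hi1 hi2
  set ip : ℤ := if i = (n : ℤ) then 1 else i + 1
  have hwin : ∀ {k c : ℤ}, k ∈ Set.Icc 1 (n : ℤ) → c ∈ Set.Icc 1 (n : ℤ) → k ≠ c →
      ¬ (n : ℤ) ∣ k - c := fun hk hc hkc h => hkc (eq_of_dvd_sub_of_mem_Icc hk hc h)
  have hsucc : ∀ {k : ℤ}, k ∈ Set.Icc 1 (n : ℤ) → k ≠ ip → ¬ (n : ℤ) ∣ k - (i + 1) :=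
    fun hk hkip h => hwin hk hip hkip (by simpa using dvd_sub h hipd)
  rcases hz' with ⟨hcom, rfl⟩ | ⟨hncom, rfl⟩
  · have hb := (apply_eq_of_commute_affS hn hper hinv hcom hdes).2
    obtain ⟨h1, h2, h3⟩ := icodeEntry_mul_affS_of_commute hn hper hinv hcom hdes
    rw [icodeEntry_eq_of_dvd_sub hper hipd,
      icodeEntry_eq_of_dvd_sub (mul_apply_add_natCast hper hσper) hipd]
    exact ⟨fun _ => ⟨h1, h2, fun k hk1 hk2 hki hkip =>
      h3 k (hwin ⟨hk1, hk2⟩ ⟨hi1, hi2⟩ hki) (hsucc ⟨hk1, hk2⟩ hkip)⟩,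
      fun h => by omega, fun h => by omega⟩
  rw [icodeEntry_eq_of_dvd_sub hper hipd, icodeEntry_eq_of_dvd_sub
    (mul_apply_add_natCast (mul_apply_add_natCast hσper hper) hσper) hipd]
  refine ⟨fun hvis => ?_, fun hb hb1 => ?_, fun hb hb1 j hj1 hj2 _ hjb => ?_⟩
  · obtain ⟨h1, h2, h3⟩ := icodeEntry_conj_affS_of_le hn hper hinv hncom hdes hvis
    exact ⟨h1, h2, fun k hk1 hk2 hki hkip =>
      h3 k (hwin ⟨hk1, hk2⟩ ⟨hi1, hi2⟩ hki) (hsucc ⟨hk1, hk2⟩ hkip)⟩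
  · obtain ⟨h1, h2⟩ := icodeEntry_conj_affS_of_apply_succ_eq hn hper hinv hdes hb1
    exact ⟨h1, fun k hk1 hk2 hki => h2 k (hwin ⟨hk1, hk2⟩ ⟨hi1, hi2⟩ hki)⟩
  · obtain ⟨h1, h2⟩ := icodeEntry_conj_affS_of_succ_lt hn hper hinv hdes (by omega)
    have hjb' : (n : ℤ) ∣ j - z (i + 1) := dvd_sub_comm.1 (Int.dvd_of_emod_eq_zero hjb)
    exact ⟨h1 j hjb', fun k hk1 hk2 hkj => h2 k fun h =>
      hwin ⟨hk1, hk2⟩ ⟨hj1, hj2⟩ hkj (by simpa using dvd_sub h hjb')⟩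

/-- the effect on the involution code of passing from `z` to
`z_{↓(i)}` when `z(i) > z(i+1)`. -/
theorem icode_of_demazure_descent (n : ℕ) (hn : 0 < n)
    (z z' : Equiv.Perm ℤ) (hz : IsAffine n z) (hzi : z⁻¹ = z)
    (i : ℤ) (hi1 : 1 ≤ i) (hi2 : i ≤ n) (hdes : z (i + 1) < z i)
    (hz' : (z * affS n i = affS n i * z ∧ z' = z * affS n i) ∨
           (z * affS n i ≠ affS n i * z ∧ z' = affS n i * z * affS n i)) :
    (z (i + 1) ≤ i →
        icodeEntry z' i = icodeEntry z (if i = (n : ℤ) then 1 else i + 1) ∧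
        icodeEntry z' (if i = (n : ℤ) then 1 else i + 1) = icodeEntry z i - 1 ∧
        ∀ k : ℤ, 1 ≤ k → k ≤ n → k ≠ i → k ≠ (if i = (n : ℤ) then 1 else i + 1) →
          icodeEntry z' k = icodeEntry z k) ∧
    (i < z (i + 1) → z (i + 1) = i + 1 →
      icodeEntry z' i = icodeEntry z i - 1 ∧
      ∀ k : ℤ, 1 ≤ k → k ≤ n → k ≠ i → icodeEntry z' k = icodeEntry z k) ∧
    (i < z (i + 1) → z (i + 1) ≠ i + 1 →
      ∀ j : ℤ, 1 ≤ j → j ≤ n → j ≠ i → (z (i + 1) - j) % (n : ℤ) = 0 →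
        icodeEntry z' j = icodeEntry z j - 1 ∧
        ∀ k : ℤ, 1 ≤ k → k ≤ n → k ≠ j → icodeEntry z' k = icodeEntry z k) :=
  icode_of_demazure_descent_general n z z' hz hzi i hi1 hi2 hdes hz'
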